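/- If G1 is a multigraph containing a cut-edge (bridge) and G2 is any multigraph, then any vertex-edge-identification G1 ⋄ G2 of G1 and G2 also contains a cut-edge. -/

import Mathlib

open scoped Classical

/-- A finite multigraph without loops: a vertex type, an edge type, and an
incidence map assigning to each edge an unordered pair of distinct vertices. -/
structure MGraph where
  V : Type
  E : Type
  finV : Finite V
  finE : Finite E
  ends : E → Sym2 V
  noLoop : ∀ e, ¬ (ends e).IsDiag

namespace MGraph

variable (G : MGraph)

/-- Degree of a vertex counting only edges in the edge set `F`. -/
noncomputable def degOn (F : Set G.E) (v : G.V) : ℕ := {e | e ∈ F ∧ v ∈ G.ends e}.ncard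

/-- Degree of a vertex. -/
noncomputable def deg (v : G.V) : ℕ := G.degOn Set.univ v

/-- Adjacency using only edges from `F`. -/
def AdjOn (F : Set G.E) (a b : G.V) : Prop := ∃ e ∈ F, G.ends e = s(a, b)

/-- Reachability using only edges from `F`. -/
def ReachOn (F : Set G.E) : G.V → G.V → Prop := Relation.ReflTransGen (G.AdjOn F)

/-- Connectivity of a multigraph. -/
def Connected : Prop := Nonempty G.V ∧ ∀ a b : G.V, G.ReachOn Set.univ a b

/-- A set of edges forms a cycle: it is nonempty, every vertex has degree 0 or 2
in it, and any two of its endpoints are joined by a path inside it. -/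
def IsCycle (C : Set G.E) : Prop :=
  C.Nonempty ∧ (∀ v, G.degOn C v = 0 ∨ G.degOn C v = 2) ∧
    ∀ e ∈ C, ∀ f ∈ C, ∀ a b : G.V, a ∈ G.ends e → b ∈ G.ends f → G.ReachOn C a b

/-- A cycle decomposition of the edge set `F`: a set of cycles inside `F` such
that every edge of `F` lies in exactly one of them. -/
def IsCycleDecompOn (F : Set G.E) (D : Set (Set G.E)) : Prop :=
  (∀ C ∈ D, G.IsCycle C ∧ C ⊆ F) ∧ ∀ e ∈ F, ∃! C, C ∈ D ∧ e ∈ C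

/-- A cycle decomposition of the graph. -/
def IsCycleDecomp (D : Set (Set G.E)) : Prop := G.IsCycleDecompOn Set.univ D

/-- Minimum number of cycles in a cycle decomposition of `F`. -/
noncomputable def cOn (F : Set G.E) : ℕ :=
  sInf {n | ∃ D, G.IsCycleDecompOn F D ∧ D.ncard = n}

/-- Maximum number of cycles in a cycle decomposition of `F`. -/
noncomputable def nuOn (F : Set G.E) : ℕ :=
  sSup {n | ∃ D, G.IsCycleDecompOn F D ∧ D.ncard = n}

/-- Minimum cycle number. -/
noncomputable def c : ℕ := G.cOn Set.univ

/-- Maximum cycle number. -/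
noncomputable def nu : ℕ := G.nuOn Set.univ

/-- A multigraph is Eulerian if it admits a closed walk traversing every edge
exactly once. -/
def IsEulerian : Prop :=
  ∃ (vs : List G.V) (es : List G.E),
    vs.length = es.length + 1 ∧
    (∀ (i : ℕ) (e : G.E) (a b : G.V), es[i]? = some e → vs[i]? = some a →
      vs[i + 1]? = some b → G.ends e = s(a, b)) ∧
    vs.head? = vs.getLast? ∧ es.Nodup ∧ ∀ e : G.E, e ∈ es

/-- A cut-edge (bridge): its endpoints are disconnected after its removal. -/
def IsBridge (e : G.E) : Prop :=
  ∃ a b, G.ends e = s(a, b) ∧ ¬ G.ReachOn {e}ᶜ a b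

/-- 2-edge-connectivity: connected and without cut-edges. -/
def TwoEdgeConnected : Prop := G.Connected ∧ ∀ e, ¬ G.IsBridge e

/-- Reachability avoiding a vertex. -/
def ReachAvoid (v : G.V) (a b : G.V) : Prop :=
  Relation.ReflTransGen (fun x y => x ≠ v ∧ y ≠ v ∧ G.AdjOn Set.univ x y) a b

/-- A cut-vertex: two vertices in the same component get separated by its removal. -/
def IsCutVertex (v : G.V) : Prop :=
  ∃ a b, a ≠ v ∧ b ≠ v ∧ G.ReachOn Set.univ a b ∧ ¬ G.ReachAvoid v a b

/-- Biconnected: connected, at least two vertices, and without cut-vertices. -/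
def Biconnected : Prop :=
  G.Connected ∧ 2 ≤ Nat.card G.V ∧ ∀ v, ¬ G.IsCutVertex v

/-- The vertices covered by a set of edges. -/
def VertexSetOf (C : Set G.E) : Set G.V := {v | ∃ e ∈ C, v ∈ G.ends e}

/-- No two edge-disjoint cycles share more than two vertices. -/
def NoTwoCyclesShareThree : Prop :=
  ∀ C1 C2 : Set G.E, G.IsCycle C1 → G.IsCycle C2 → Disjoint C1 C2 →
    (G.VertexSetOf C1 ∩ G.VertexSetOf C2).ncard ≤ 2

/-- An Eulerian multiedge: two vertices joined by an even positive number of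
parallel edges. -/
def IsEulerianMultiedge : Prop :=
  Nat.card G.V = 2 ∧ 0 < Nat.card G.E ∧ Even (Nat.card G.E)

end MGraph

/-- Isomorphism of multigraphs. -/
structure MIso (G H : MGraph) where
  vEquiv : G.V ≃ H.V
  eEquiv : G.E ≃ H.E
  ends_eq : ∀ e, H.ends (eEquiv e) = (G.ends e).map vEquiv

namespace MGraph

/-- Vertex-identification: glue `u1 ∈ V(G1)` with `u2 ∈ V(G2)`. -/
noncomputable def vertexIdent (G1 G2 : MGraph) (u1 : G1.V) (u2 : G2.V) : MGraph where
  V := G1.V ⊕ {v : G2.V // v ≠ u2}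
  E := G1.E ⊕ G2.E
  finV := by have := G1.finV; have := G2.finV; infer_instance
  finE := by have := G1.finE; have := G2.finE; infer_instance
  ends := fun e =>
    match e with
    | Sum.inl e => (G1.ends e).map Sum.inl
    | Sum.inr e => (G2.ends e).map
        (fun v => if h : v = u2 then Sum.inl u1 else Sum.inr ⟨v, h⟩)
  noLoop := by
    rintro (e | e) h
    · exact G1.noLoop e ((Sym2.isDiag_map Sum.inl_injective).mp h)
    · refine G2.noLoop e ((Sym2.isDiag_map ?_).mp h)
      intro a b hab
      by_cases ha : a = u2 <;> by_cases hb : b = u2 <;>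
        simp [ha, hb] at hab ⊢ <;> simp_all

/-- Edge-identification: delete `e1` and `e2` (with endpoints `u1, v1` resp.
`u2, v2`) and add the new edges `u1u2` and `v1v2`. -/
def edgeIdent (G1 G2 : MGraph) (e1 : G1.E) (e2 : G2.E)
    (u1 v1 : G1.V) (u2 v2 : G2.V) : MGraph where
  V := G1.V ⊕ G2.V
  E := {e : G1.E // e ≠ e1} ⊕ {e : G2.E // e ≠ e2} ⊕ Bool
  finV := by have := G1.finV; have := G2.finV; infer_instance
  finE := by have := G1.finE; have := G2.finE; infer_instance
  ends := fun e =>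
    match e with
    | Sum.inl e => (G1.ends e.1).map Sum.inl
    | Sum.inr (Sum.inl e) => (G2.ends e.1).map Sum.inr
    | Sum.inr (Sum.inr true) => s(Sum.inl u1, Sum.inr u2)
    | Sum.inr (Sum.inr false) => s(Sum.inl v1, Sum.inr v2)
  noLoop := by
    rintro (e | e | b) h
    · exact G1.noLoop e.1 ((Sym2.isDiag_map Sum.inl_injective).mp h)
    · exact G2.noLoop e.1 ((Sym2.isDiag_map Sum.inr_injective).mp h)
    · cases b <;> simp [Sym2.mk_isDiag_iff] at h

/-- Vertex-edge-identification: identify `v1` with `v2`, delete `e1 = u1v1`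
and `e2 = u2v2`, and add a new edge `u1u2`. -/
noncomputable def vertexEdgeIdent (G1 G2 : MGraph) (e1 : G1.E) (e2 : G2.E)
    (u1 v1 : G1.V) (u2 v2 : G2.V) (h2 : G2.ends e2 = s(u2, v2)) : MGraph where
  V := G1.V ⊕ {w : G2.V // w ≠ v2}
  E := {e : G1.E // e ≠ e1} ⊕ {e : G2.E // e ≠ e2} ⊕ Unit
  finV := by have := G1.finV; have := G2.finV; infer_instance
  finE := by have := G1.finE; have := G2.finE; infer_instance
  ends := fun e =>
    match e with
    | Sum.inl e => (G1.ends e.1).map Sum.inl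
    | Sum.inr (Sum.inl e) => (G2.ends e.1).map
        (fun w => if h : w = v2 then Sum.inl v1 else Sum.inr ⟨w, h⟩)
    | Sum.inr (Sum.inr _) =>
        s(Sum.inl u1, Sum.inr ⟨u2, fun h =>
          G2.noLoop e2 (by rw [h2, h]; exact Sym2.mk_isDiag_iff.mpr rfl)⟩)
  noLoop := by
    rintro (e | e | u) h
    · exact G1.noLoop e.1 ((Sym2.isDiag_map Sum.inl_injective).mp h)
    · refine G2.noLoop e.1 ((Sym2.isDiag_map ?_).mp h)
      intro a b hab
      by_cases ha : a = v2 <;> by_cases hb : b = v2 <;>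
        simp [ha, hb] at hab ⊢ <;> simp_all
    · simp [Sym2.mk_isDiag_iff] at h

/-- Delete an edge from a multigraph. -/
def deleteEdge (G : MGraph) (e : G.E) : MGraph where
  V := G.V
  E := {f : G.E // f ≠ e}
  finV := G.finV
  finE := by have := G.finE; infer_instance
  ends := fun f => G.ends f.1
  noLoop := fun f => G.noLoop f.1

/-- `Sym2.pmap`-style map into a subtype. -/
noncomputable def sym2Pmap {α β : Type} {p : α → Prop} (f : ∀ a, p a → β)
    (s : Sym2 α) (h : ∀ a ∈ s, p a) : Sym2 β :=
  let z := Classical.choose (Quot.exists_rep s)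
  s(f z.1 (h z.1 (by
      have hz : Quot.mk _ z = s := Classical.choose_spec (Quot.exists_rep s)
      rw [← hz]; exact Sym2.mem_mk_left z.1 z.2)),
    f z.2 (h z.2 (by
      have hz : Quot.mk _ z = s := Classical.choose_spec (Quot.exists_rep s)
      rw [← hz]; exact Sym2.mem_mk_right z.1 z.2)))

/-- Delete a vertex (and all incident edges) from a multigraph. -/
noncomputable def deleteVertex (G : MGraph) (v : G.V) : MGraph where
  V := {w : G.V // w ≠ v}
  E := {e : G.E // v ∉ G.ends e}
  finV := by have := G.finV; infer_instance
  finE := by have := G.finE; infer_instance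
  ends := fun e => sym2Pmap (fun a ha => (⟨a, ha⟩ : {w : G.V // w ≠ v}))
    (G.ends e.1) (fun a ha hav => e.2 (hav ▸ ha))
  noLoop := by
    rintro ⟨e, he⟩ h
    apply G.noLoop e
    unfold sym2Pmap at h
    have hz : Quot.mk _ (Classical.choose (Quot.exists_rep (G.ends e))) = G.ends e :=
      Classical.choose_spec (Quot.exists_rep (G.ends e))
    rw [Sym2.mk_isDiag_iff] at h
    have : (Classical.choose (Quot.exists_rep (G.ends e))).1 =
        (Classical.choose (Quot.exists_rep (G.ends e))).2 := congrArg Subtype.val h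
    rw [← hz]
    exact Sym2.mk_isDiag_iff.mpr this

end MGraph

/-- A tree decomposition of a multigraph: a tree of bags covering all vertices
and edges such that the bags containing a given vertex form a subtree. -/
structure TreeDecomp (G : MGraph) where
  ι : Type
  t : SimpleGraph ι
  isTree : t.IsTree
  bag : ι → Set G.V
  covers_vertex : ∀ v : G.V, ∃ i, v ∈ bag i
  covers_edge : ∀ e : G.E, ∃ i, ∀ v ∈ G.ends e, v ∈ bag i
  bags_connected : ∀ v : G.V, (SimpleGraph.induce {i | v ∈ bag i} t).Connected

namespace MGraph

/-- The graph has treewidth at most `k`. -/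
def twLE (G : MGraph) (k : ℕ) : Prop :=
  ∃ T : TreeDecomp G, ∀ i, (T.bag i).ncard ≤ k + 1

/-- Treewidth of a multigraph. -/
noncomputable def treewidth (G : MGraph) : ℕ := sInf {k | G.twLE k}

/-- The closed necklace on `n ≥ 2` vertices: a cycle of length `n` with all
of its edges doubled. -/
def necklace (n : ℕ) (hn : 2 ≤ n) : MGraph where
  V := ZMod n
  E := ZMod n × Bool
  finV := by have : NeZero n := ⟨by omega⟩; infer_instance
  finE := by have : NeZero n := ⟨by omega⟩; infer_instance
  ends := fun e => s(e.1, e.1 + 1)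
  noLoop := by
    have : Fact (1 < n) := ⟨hn⟩
    intro e h
    rw [Sym2.mk_isDiag_iff] at h
    exact one_ne_zero (left_eq_add.mp h)

end MGraph

/-!
Contracting the `G2`-side of `G1 ⋄ G2` onto `v1` maps `G1 ⋄ G2` onto `G1`: edges of `G1` go to
themselves, the new edge `u1u2` goes to `e1 = u1v1`, and the edges of `G2` become loops. A vertex
map of this kind carries walks avoiding an edge to walks avoiding its image, so an edge of
`G1 ⋄ G2` mapping onto a bridge of `G1` (the bridge itself, or the new edge when the bridge is
`e1`) is a bridge.
-/

namespace MGraph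

theorem AdjOn.symm {G : MGraph} {F : Set G.E} {a b : G.V} (h : G.AdjOn F a b) :
    G.AdjOn F b a := by
  obtain ⟨e, heF, he⟩ := h
  exact ⟨e, heF, he.trans Sym2.eq_swap⟩

theorem ReachOn.symm {G : MGraph} {F : Set G.E} {a b : G.V} (h : G.ReachOn F a b) :
    G.ReachOn F b a :=
  Relation.ReflTransGen.mono (fun _ _ => AdjOn.symm) _ _
    (Relation.ReflTransGen.swap (r := G.AdjOn F) _ _ h)

theorem IsBridge.not_reachOn {G : MGraph} {e : G.E} (he : G.IsBridge e) {x y : G.V}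
    (hxy : G.ends e = s(x, y)) : ¬ G.ReachOn {e}ᶜ x y := by
  obtain ⟨a, b, hab, hnr⟩ := he
  rcases Sym2.eq_iff.mp (hxy.symm.trans hab) with ⟨rfl, rfl⟩ | ⟨rfl, rfl⟩
  · exact hnr
  · exact fun h => hnr h.symm

theorem ReachOn.map {G H : MGraph} {F : Set G.E} {F' : Set H.E} (f : G.V → H.V)
    (hf : ∀ g ∈ F, ((G.ends g).map f).IsDiag ∨ ∃ e ∈ F', (G.ends g).map f = H.ends e)
    {x y : G.V} (h : G.ReachOn F x y) : H.ReachOn F' (f x) (f y) := by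
  refine Relation.ReflTransGen.lift' f (fun a b ⟨g, hgF, hg⟩ => ?_) x y h
  change H.ReachOn F' (f a) (f b)
  have hfg := hf g hgF
  rw [hg, Sym2.map_mk] at hfg
  rcases hfg with hdiag | ⟨e, heF', he⟩
  · rw [Sym2.mk_isDiag_iff.mp hdiag]
    exact Relation.ReflTransGen.refl
  · exact .single ⟨e, heF', he.symm⟩

theorem IsBridge.of_map {G H : MGraph} (f : G.V → H.V) {g : G.E} {e : H.E}
    (hge : (G.ends g).map f = H.ends e)
    (hf : ∀ g' ≠ g, ((G.ends g').map f).IsDiag ∨ ∃ e' ≠ e, (G.ends g').map f = H.ends e')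
    (he : H.IsBridge e) : G.IsBridge g := by
  obtain ⟨x, y, hxy⟩ : ∃ x y, G.ends g = s(x, y) := Sym2.exists.mp ⟨_, rfl⟩
  refine ⟨x, y, hxy, fun hr => he.not_reachOn ?_ (hr.map f hf)⟩
  rw [← hge, hxy, Sym2.map_mk]

end MGraph

namespace MGraph.vertexEdgeIdent

variable {G1 G2 : MGraph} {e1 : G1.E} {e2 : G2.E} {u1 v1 : G1.V} {u2 v2 : G2.V}
  {h2 : G2.ends e2 = s(u2, v2)}

def collapse (v1 : G1.V) : G1.V ⊕ {w : G2.V // w ≠ v2} → G1.V :=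
  Sum.elim id fun _ => v1

theorem map_collapse_ends_inl (f : {f : G1.E // f ≠ e1}) :
    ((vertexEdgeIdent G1 G2 e1 e2 u1 v1 u2 v2 h2).ends (.inl f)).map (collapse v1)
      = G1.ends f.1 := by
  change ((G1.ends f.1).map Sum.inl).map (collapse v1) = _
  rw [Sym2.map_map]
  exact congrFun Sym2.map_id' _

theorem isDiag_map_collapse_ends_inr_inl (f : {f : G2.E // f ≠ e2}) :
    (((vertexEdgeIdent G1 G2 e1 e2 u1 v1 u2 v2 h2).ends (.inr (.inl f))).map
      (collapse v1)).IsDiag := by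
  obtain ⟨x, y, hxy⟩ : ∃ x y, G2.ends f.1 = s(x, y) := Sym2.exists.mp ⟨_, rfl⟩
  change (((G2.ends f.1).map _).map (collapse v1)).IsDiag
  rw [hxy, Sym2.map_map, Sym2.map_mk, Sym2.mk_isDiag_iff]
  simp only [Function.comp_apply, collapse]
  split_ifs <;> rfl

theorem map_collapse_ends_inr_inr (h1 : G1.ends e1 = s(u1, v1)) (u : Unit) :
    ((vertexEdgeIdent G1 G2 e1 e2 u1 v1 u2 v2 h2).ends (.inr (.inr u))).map (collapse v1)
      = G1.ends e1 := by
  rw [h1]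
  rfl

end MGraph.vertexEdgeIdent

/-- vertex-edge-identification preserves the existence of a cut-edge. -/
theorem vertexEdgeIdent_bridge (G1 G2 : MGraph)
    (e1 : G1.E) (e2 : G2.E) (u1 v1 : G1.V) (u2 v2 : G2.V)
    (h1 : G1.ends e1 = s(u1, v1)) (h2 : G2.ends e2 = s(u2, v2))
    (hbridge : ∃ e, G1.IsBridge e) :
    ∃ e, (MGraph.vertexEdgeIdent G1 G2 e1 e2 u1 v1 u2 v2 h2).IsBridge e := by
  open MGraph.vertexEdgeIdent in
  obtain ⟨e, he⟩ := hbridge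
  by_cases hee1 : e = e1
  · subst hee1
    refine ⟨.inr (.inr ()), he.of_map (collapse v1) (map_collapse_ends_inr_inr h1 ()) ?_⟩
    rintro (⟨f, hf⟩ | f | ⟨⟩) hne
    · exact .inr ⟨f, hf, map_collapse_ends_inl _⟩
    · exact .inl (isDiag_map_collapse_ends_inr_inl f)
    · exact absurd rfl hne
  · refine ⟨.inl ⟨e, hee1⟩, he.of_map (collapse v1) (map_collapse_ends_inl _) ?_⟩
    rintro (⟨f, hf⟩ | f | u) hne
    · exact .inr ⟨f, fun h => hne (by subst h; rfl), map_collapse_ends_inl _⟩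
    · exact .inl (isDiag_map_collapse_ends_inr_inl f)
    · exact .inr ⟨e1, Ne.symm hee1, map_collapse_ends_inr_inr h1 u⟩
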